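/- Let (X,d) be a compact metric space, f_{1,∞} an NDS on X, Z ⊆ X, and ψ ∈ C(X,ℝ). Then the Pesin–Pitskel topological pressure equals the weighted topological pressure: P^B_{f_{1,∞}}(Z,ψ) = P^W_{f_{1,∞}}(Z,ψ). -/

import Mathlib

/-!
Every cover is a weighted cover, so `P^W(ε) ≤ P^B(ε)`. Conversely, sort the balls of a weighted
cover by their length `k`: a maximal `2ε`-separated set for the Bowen metric `d_k` turns the balls
of each length into a genuine cover by balls of radius `3ε`, at cost at most `1 / t_k` times the
weighted cost, and uniform continuity of `ψ` makes the change of radius cost only `e^{δ k}`; hence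
`P^B(3ε) ≤ P^W(ε) + 2δ`. The same continuity estimate shows that `P^B(ε)` is monotone in `ε` up to
arbitrarily small errors, so it converges as `ε → 0`, and `P^W(ε)` is squeezed to the same limit.
-/

open Filter MeasureTheory Set ENNReal

noncomputable section

variable {X : Type} [MetricSpace X]

/-- The iterate `f_1^n = f_n ∘ ⋯ ∘ f_1` of the NDS `f`, where `f 0` is the first map `f_1`. -/
def nIter (f : ℕ → X → X) : ℕ → X → X
  | 0 => id
  | n + 1 => f n ∘ nIter f n

/-- The Bowen (dynamical) ball `B_n(x, ε)` for the Bowen metric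
`d_n(x,y) = max_{0 ≤ j < n} d(f_1^j x, f_1^j y)`. -/
def bowenBall (f : ℕ → X → X) (n : ℕ) (x : X) (ε : ℝ) : Set X :=
  {y | ∀ j < n, dist (nIter f j x) (nIter f j y) < ε}

/-- The Birkhoff sum `S_{1,n} ψ (x) = ∑_{j=0}^{n-1} ψ(f_1^j x)`. -/
def birkSum (f : ℕ → X → X) (ψ : X → ℝ) (n : ℕ) (x : X) : ℝ :=
  ∑ j ∈ Finset.range n, ψ (nIter f j x)

/-- `S_{1,n} ψ (x, ε) = sup_{y ∈ B_n(x,ε)} S_{1,n} ψ (y)`. -/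
def birkSupBall (f : ℕ → X → X) (ψ : X → ℝ) (n : ℕ) (x : X) (ε : ℝ) : ℝ :=
  sSup (birkSum f ψ n '' bowenBall f n x ε)

/-- `M(n, α, ε, Z, ψ)`: infimum of `∑_i exp(-α n_i + S_{1,n_i}ψ(x_i, ε))` over all finite or
countable covers `Z ⊆ ⋃_i B_{n_i}(x_i, ε)` with `n_i ≥ n`. -/
def Mpre (f : ℕ → X → X) (ψ : X → ℝ) (Z : Set X) (n : ℕ) (α ε : ℝ) : ℝ≥0∞ :=
  sInf { S : ℝ≥0∞ | ∃ (u : Set ℕ) (c : ℕ → X) (m : ℕ → ℕ),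
    (∀ i ∈ u, n ≤ m i) ∧ (Z ⊆ ⋃ i ∈ u, bowenBall f (m i) (c i) ε) ∧
    S = ∑' i : u, ENNReal.ofReal (Real.exp (-α * (m i : ℝ) + birkSupBall f ψ (m i) (c i) ε)) }

/-- `𝓜(n, α, ε, Z, ψ)`: as `Mpre` but with the Birkhoff sums evaluated at the centers. -/
def MpreC (f : ℕ → X → X) (ψ : X → ℝ) (Z : Set X) (n : ℕ) (α ε : ℝ) : ℝ≥0∞ :=
  sInf { S : ℝ≥0∞ | ∃ (u : Set ℕ) (c : ℕ → X) (m : ℕ → ℕ),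
    (∀ i ∈ u, n ≤ m i) ∧ (Z ⊆ ⋃ i ∈ u, bowenBall f (m i) (c i) ε) ∧
    S = ∑' i : u, ENNReal.ofReal (Real.exp (-α * (m i : ℝ) + birkSum f ψ (m i) (c i))) }

/-- `M(α, ε, Z, ψ) = lim_{n→∞} M(n, α, ε, Z, ψ)`; the quantity is nondecreasing in `n`,
so the limit is the supremum. -/
def Mlim (f : ℕ → X → X) (ψ : X → ℝ) (Z : Set X) (α ε : ℝ) : ℝ≥0∞ :=
  ⨆ n : ℕ, Mpre f ψ Z n α ε

/-- `𝓜(α, ε, Z, ψ) = lim_{n→∞} 𝓜(n, α, ε, Z, ψ)`. -/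
def MlimC (f : ℕ → X → X) (ψ : X → ℝ) (Z : Set X) (α ε : ℝ) : ℝ≥0∞ :=
  ⨆ n : ℕ, MpreC f ψ Z n α ε

/-- `P^B(ε, Z, ψ) = inf {α : M(α, ε, Z, ψ) = 0}`, as an extended real. -/
def PBeps (f : ℕ → X → X) (ψ : X → ℝ) (Z : Set X) (ε : ℝ) : EReal :=
  sInf (Real.toEReal '' {α : ℝ | Mlim f ψ Z α ε = 0})

/-- `𝒫^B(ε, Z, ψ) = inf {α : 𝓜(α, ε, Z, ψ) = 0}`. -/
def PBCeps (f : ℕ → X → X) (ψ : X → ℝ) (Z : Set X) (ε : ℝ) : EReal :=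
  sInf (Real.toEReal '' {α : ℝ | MlimC f ψ Z α ε = 0})

/-- The Pesin–Pitskel topological pressure `P^B_{f_{1,∞}}(Z, ψ) = lim_{ε→0} P^B(ε, Z, ψ)`. -/
def PB (f : ℕ → X → X) (ψ : X → ℝ) (Z : Set X) : EReal :=
  limUnder (nhdsWithin 0 (Ioi 0)) fun ε : ℝ => PBeps f ψ Z ε

/-- `W(n, α, ε, Z, ψ)`: the weighted analogue of `Mpre`. -/
def Wpre (f : ℕ → X → X) (ψ : X → ℝ) (Z : Set X) (n : ℕ) (α ε : ℝ) : ℝ≥0∞ :=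
  sInf { S : ℝ≥0∞ | ∃ (u : Set ℕ) (cx : ℕ → X) (m : ℕ → ℕ) (c : ℕ → ℝ),
    (∀ i ∈ u, 0 < c i) ∧ (∀ i ∈ u, n ≤ m i) ∧
    (∀ z ∈ Z, 1 ≤ ∑' i : u,
      (bowenBall f (m i) (cx i) ε).indicator (fun _ => ENNReal.ofReal (c i)) z) ∧
    S = ∑' i : u, ENNReal.ofReal (c i) *
      ENNReal.ofReal (Real.exp (-α * (m i : ℝ) + birkSupBall f ψ (m i) (cx i) ε)) }

/-- `W(α, ε, Z, ψ) = lim_{n→∞} W(n, α, ε, Z, ψ)`. -/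
def Wlim (f : ℕ → X → X) (ψ : X → ℝ) (Z : Set X) (α ε : ℝ) : ℝ≥0∞ :=
  ⨆ n : ℕ, Wpre f ψ Z n α ε

/-- `P^W(ε, Z, ψ)`: the critical value of `α` at which `W(α, ε, Z, ψ)` jumps from `∞` to `0`. -/
def PWeps (f : ℕ → X → X) (ψ : X → ℝ) (Z : Set X) (ε : ℝ) : EReal :=
  sInf (Real.toEReal '' {α : ℝ | Wlim f ψ Z α ε = 0})

/-- The weighted topological pressure `P^W_{f_{1,∞}}(Z, ψ) = lim_{ε→0} P^W(ε, Z, ψ)`. -/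
def PW (f : ℕ → X → X) (ψ : X → ℝ) (Z : Set X) : EReal :=
  limUnder (nhdsWithin 0 (Ioi 0)) fun ε : ℝ => PWeps f ψ Z ε

/-- Bowen topological entropy `h^B_top(f_{1,∞}, Z)`, i.e. pressure of the zero potential. -/
def hBtop (f : ℕ → X → X) (Z : Set X) : EReal := PB f (fun _ => 0) Z

/-- Weighted Bowen topological entropy `h^{WB}_top(f_{1,∞}, Z)`. -/
def hWBtop (f : ℕ → X → X) (Z : Set X) : EReal := PW f (fun _ => 0) Z

/-- `EReal → ℝ≥0∞`, sending `⊤` to `⊤` and everything negative to `0`. -/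
def ERealToENNReal (x : EReal) : ℝ≥0∞ := if x = ⊤ then ⊤ else ENNReal.ofReal x.toReal

variable [MeasurableSpace X]

/-- The measure-theoretic local pressure
`P_μ(x,ψ) = lim_{ε→0} liminf_{n→∞} (-log μ(B_n(x,ε)) + S_{1,n}ψ(x))/n`. -/
def Ploc (f : ℕ → X → X) (μ : Measure X) (ψ : X → ℝ) (x : X) : EReal :=
  limUnder (nhdsWithin 0 (Ioi 0)) fun ε : ℝ =>
    Filter.atTop.liminf fun n : ℕ =>
      (((n : ℝ)⁻¹ : ℝ) : EReal) *
        (-(ENNReal.log (μ (bowenBall f n x ε))) + ((birkSum f ψ n x : ℝ) : EReal))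

/-- The integral of an extended-real-valued function: the difference of the lower integrals of
its positive and negative parts. -/
def ERealIntegral (μ : Measure X) (g : X → EReal) : EReal :=
  ((∫⁻ x, ERealToENNReal (g x) ∂μ : ℝ≥0∞) : EReal)
    - ((∫⁻ x, ERealToENNReal (-(g x)) ∂μ : ℝ≥0∞) : EReal)

/-- The measure-theoretic pressure `P_μ(X, ψ) = ∫ P_μ(x, ψ) dμ(x)`. -/
def Pmeas (f : ℕ → X → X) (μ : Measure X) (ψ : X → ℝ) : EReal :=
  ERealIntegral μ (Ploc f μ ψ)

/-- The measure-theoretic local lower entropy `h̲_μ(f_{1,∞}, x)`. -/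
def hloc (f : ℕ → X → X) (μ : Measure X) (x : X) : EReal := Ploc f μ (fun _ => 0) x

/-- The measure-theoretic lower entropy `h̲_μ(f_{1,∞}) = ∫ h̲_μ(f_{1,∞}, x) dμ(x)`. -/
def hmeas (f : ℕ → X → X) (μ : Measure X) : EReal := Pmeas f μ (fun _ => 0)

open scoped Topology

section Sums

variable {ι κ α : Type*}

theorem tsum_subtype_eq_tsum_fiber (u : Set ι) (m : ι → κ) (a : ι → ℝ≥0∞) :
    ∑' i : u, a i = ∑' k, ∑' i : ↥(u ∩ m ⁻¹' {k}), a i := by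
  rw [tsum_subtype, ← ENNReal.tsum_fiberwise (u.indicator a) m]
  refine tsum_congr fun k => ?_
  rw [tsum_subtype, tsum_subtype, Set.indicator_indicator, Set.inter_comm]

theorem exists_le_tsum_fiber (u : Set ι) (m : ι → κ) (a : ι → ℝ≥0∞) {t : κ → ℝ≥0∞}
    (ht : ∑' k, t k < 1) (h : 1 ≤ ∑' i : u, a i) :
    ∃ k, t k ≤ ∑' i : ↥(u ∩ m ⁻¹' {k}), a i := by
  by_contra! hlt
  rw [tsum_subtype_eq_tsum_fiber u m] at h
  exact (h.trans (ENNReal.tsum_le_tsum fun k => (hlt k).le)).not_gt ht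

theorem sum_tsum_le_tsum_of_pairwiseDisjoint {s : Finset α} {I : α → Set ι} {L : Set ι}
    (hd : (s : Set α).PairwiseDisjoint I) (hI : ∀ z ∈ s, I z ⊆ L) (g : ι → ℝ≥0∞) :
    ∑ z ∈ s, ∑' i : I z, g i ≤ ∑' i : L, g i := by
  rw [← Finset.tsum_subtype', ← ENNReal.tsum_biUnion' hd]
  exact ENNReal.tsum_mono_subtype g (Set.iUnion₂_subset hI)

theorem tsum_indicator_apply_eq_tsum_inter (L : Set ι) (B : ι → Set α) (a : ι → ℝ≥0∞) (z : α) :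
    ∑' i : L, (B i).indicator (fun _ => a i) z = ∑' i : ↥(L ∩ {i | z ∈ B i}), a i := by
  rw [tsum_subtype L fun i => (B i).indicator (fun _ => a i) z, tsum_subtype]
  refine tsum_congr fun i => ?_
  by_cases hi : i ∈ L <;> by_cases hz : z ∈ B i <;> simp [Set.indicator, hi, hz]

theorem tsum_geometric_weights_lt_one {ρ : ℝ} (hρ0 : 0 ≤ ρ) (hρ1 : ρ < 1) :
    ∑' k : ℕ, ENNReal.ofReal ((1 - ρ) / 2) * ENNReal.ofReal ρ ^ k < 1 := by
  have hsub : 1 - ENNReal.ofReal ρ = ENNReal.ofReal (1 - ρ) := by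
    rw [ENNReal.ofReal_sub _ hρ0, ENNReal.ofReal_one]
  rw [ENNReal.tsum_mul_left, ENNReal.tsum_geometric, hsub,
    ← ENNReal.ofReal_inv_of_pos (by linarith), ← ENNReal.ofReal_mul (by linarith),
    ENNReal.ofReal_lt_one, div_mul_eq_mul_div, mul_inv_cancel₀ (by linarith)]
  norm_num

end Sums

namespace EReal

variable {β : Type*} {l : Filter β}

theorem le_of_forall_pos_le_add_coe {a b : EReal} (h : ∀ δ : ℝ, 0 < δ → a ≤ b + δ) : a ≤ b := by
  refine le_of_forall_lt_iff_le.1 fun z hz => ?_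
  induction b using EReal.rec with
  | bot => exact (h 1 one_pos).trans (by simp)
  | coe b =>
    have hbz : (0 : ℝ) < z - b := _root_.sub_pos.2 (EReal.coe_lt_coe_iff.1 hz)
    simpa [← EReal.coe_add, ← EReal.coe_sub] using h (z - b) hbz
  | top => exact absurd hz (not_lt.2 le_top)

theorem liminf_le_liminf_add_coe [l.NeBot] {u v : β → EReal} {δ : ℝ}
    (h : ∀ᶠ x in l, u x ≤ v x + δ) : liminf u l ≤ liminf v l + δ :=
  calc liminf u l ≤ liminf (fun x => (δ : EReal) + v x) l :=
        liminf_le_liminf (h.mono fun x hx => hx.trans_eq (add_comm _ _))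
    _ ≤ limsup (fun _ => (δ : EReal)) l + liminf v l := liminf_add_le (by simp) (by simp)
    _ = liminf v l + δ := by rw [limsup_const, add_comm]

theorem tendsto_limsup_of_eventually_le_add [l.NeBot] {P : β → EReal}
    (h : ∀ δ : ℝ, 0 < δ → ∀ᶠ x in l, ∀ᶠ y in l, P x ≤ P y + δ) :
    Tendsto P l (𝓝 (limsup P l)) := by
  refine tendsto_of_le_liminf_of_limsup_le ?_ le_rfl
  refine le_of_forall_pos_le_add_coe fun δ hδ => limsup_le_of_le (by isBoundedDefault) ?_
  filter_upwards [h δ hδ] with x hx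
  simpa using liminf_le_liminf_add_coe (u := fun _ => P x) hx

theorem tendsto_of_le_of_eventually_le_add [l.NeBot] {P Q R : β → EReal} {L : EReal}
    (hQ : Tendsto Q l (𝓝 L)) (hR : Tendsto R l (𝓝 L)) (hPQ : ∀ x, P x ≤ Q x)
    (hRP : ∀ δ : ℝ, 0 < δ → ∀ᶠ x in l, R x ≤ P x + δ) : Tendsto P l (𝓝 L) := by
  refine tendsto_of_le_liminf_of_limsup_le ?_ ?_
  · rw [← hR.liminf_eq]
    exact le_of_forall_pos_le_add_coe fun δ hδ => liminf_le_liminf_add_coe (hRP δ hδ)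
  · rw [← hQ.limsup_eq]
    exact limsup_le_limsup (Eventually.of_forall hPQ)

end EReal

theorem sInf_coe_zeroSet_le_add {G₁ G₂ : ℝ → ℝ≥0∞} {δ : ℝ}
    (h : ∀ α, G₁ α = 0 → G₂ (α + δ) = 0) :
    sInf (Real.toEReal '' {α | G₂ α = 0}) ≤ sInf (Real.toEReal '' {α | G₁ α = 0}) + δ := by
  rw [← EReal.sub_le_iff_le_add (by simp) (by simp)]
  refine le_sInf ?_
  rintro _ ⟨α, hα, rfl⟩
  rw [EReal.sub_le_iff_le_add (by simp) (by simp), ← EReal.coe_add]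
  exact sInf_le ⟨α + δ, h α hα, rfl⟩

theorem eventually_abs_sub_le_of_uniformContinuous {Y : Type*} [PseudoMetricSpace Y] {ψ : Y → ℝ}
    (hψ : UniformContinuous ψ) {δ : ℝ} (hδ : 0 < δ) :
    ∀ᶠ r in 𝓝[>] (0 : ℝ), ∀ a b : Y, dist a b < r → |ψ a - ψ b| ≤ δ := by
  obtain ⟨γ, hγ, hψγ⟩ := Metric.uniformContinuous_iff.1 hψ δ hδ
  filter_upwards [Ioc_mem_nhdsGT hγ] with r hr a b hab
  exact (hψγ (hab.trans_le hr.2)).le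

section Separated

open Metric

theorem exists_finset_separated_cover {ι Y : Type*} [PseudoMetricSpace Y] (F : ι → Y)
    {W : Set ι} (hW : TotallyBounded (F '' W)) {r : ℝ} (hr : 0 < r) :
    ∃ s : Finset ι, ↑s ⊆ W ∧ (s : Set ι).Pairwise (fun z z' => r < dist (F z) (F z')) ∧
      ∀ w ∈ W, ∃ z ∈ s, dist (F z) (F w) ≤ r := by
  lift r to NNReal using hr.le
  have hpack : packingNumber r (F '' W) ≠ ⊤ := by
    obtain ⟨N, -, hNfin, hN⟩ :=
      exists_finite_isCover_of_totallyBounded (ε := r / 2) (by simpa using hr.ne') hW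
    have h2 := packingNumber_two_mul_le_externalCoveringNumber (r / 2) (F '' W)
    rw [mul_div_cancel₀ _ two_ne_zero] at h2
    exact ne_top_of_le_ne_top hNfin.encard_lt_top.ne (h2.trans hN.externalCoveringNumber_le_encard)
  obtain ⟨u, huW, hu⟩ := Set.subset_image_iff.1 (maximalSeparatedSet_subset (ε := r) (A := F '' W))
  obtain ⟨v, hvu, hbij⟩ := Set.exists_subset_bijOn u F
  rw [hu] at hbij
  have hv : v.Finite := by
    refine Set.Finite.of_finite_image ?_ hbij.injOn
    rw [hbij.image_eq, ← Set.encard_ne_top_iff, encard_maximalSeparatedSet hpack]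
    exact hpack
  refine ⟨hv.toFinset, by simpa using hvu.trans huW, fun z hz z' hz' hne => ?_, fun w hw => ?_⟩
  · rw [Finset.mem_coe, Set.Finite.mem_toFinset] at hz hz'
    have : (r : ENNReal) < edist (F z) (F z') :=
      isSeparated_maximalSeparatedSet (hbij.mapsTo hz) (hbij.mapsTo hz') (hbij.injOn.ne hz hz' hne)
    rwa [edist_nndist, ENNReal.coe_lt_coe, ← NNReal.coe_lt_coe, coe_nndist] at this
  · obtain ⟨y, hy, hwy⟩ := isCover_maximalSeparatedSet hpack (Set.mem_image_of_mem F hw)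
    obtain ⟨z, hz, rfl⟩ := hbij.surjOn hy
    refine ⟨z, hv.mem_toFinset.2 hz, ?_⟩
    change edist (F w) (F z) ≤ r at hwy
    rwa [edist_nndist, ENNReal.coe_le_coe, ← NNReal.coe_le_coe, coe_nndist, dist_comm] at hwy

end Separated

section Bowen

variable {X : Type} {f : ℕ → X → X} {ψ : X → ℝ}

theorem bddAbove_range_birkSum (hψ : BddAbove (Set.range ψ)) (n : ℕ) :
    BddAbove (Set.range (birkSum f ψ n)) := by
  obtain ⟨C, hC⟩ := hψ
  refine ⟨n * C, Set.forall_mem_range.2 fun x => ?_⟩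
  simpa [birkSum] using Finset.sum_le_card_nsmul (Finset.range n) _ C
    fun j _ => hC (Set.mem_range_self _)

variable [MetricSpace X] {n : ℕ} {x y z : X} {r s : ℝ}

theorem mem_bowenBall_self (hr : 0 < r) : x ∈ bowenBall f n x r :=
  fun j _ => by simpa using hr

theorem mem_bowenBall_comm : y ∈ bowenBall f n x r ↔ x ∈ bowenBall f n y r := by
  simp only [bowenBall, Set.mem_ofPred_eq, dist_comm]

theorem mem_bowenBall_trans (hy : y ∈ bowenBall f n x r) (hz : z ∈ bowenBall f n y s) :
    z ∈ bowenBall f n x (r + s) :=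
  fun j hj => (dist_triangle _ _ _).trans_lt (add_lt_add (hy j hj) (hz j hj))

theorem bowenBall_mono (h : r ≤ s) : bowenBall f n x r ⊆ bowenBall f n x s :=
  fun _ hy j hj => (hy j hj).trans_le h

theorem exists_finset_bowen_separated_cover [CompactSpace X] (k : ℕ)
    (hr : 0 < r) (Y : Set X) :
    ∃ s : Finset X, ↑s ⊆ Y ∧ (s : Set X).Pairwise (fun z z' => z' ∉ bowenBall f k z r) ∧
      ∀ w ∈ Y, ∃ z ∈ s, ∀ j < k, dist (nIter f j z) (nIter f j w) ≤ r := by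
  set F : X → Fin k → X := fun x j => nIter f j x
  have hY : TotallyBounded (F '' Y) := isCompact_univ.totallyBounded.subset (Set.subset_univ _)
  obtain ⟨s, hsY, hsep, hcov⟩ := exists_finset_separated_cover F hY hr
  refine ⟨s, hsY, fun z hz z' hz' hne hz'z => (hsep hz hz' hne).not_ge ?_, fun w hw => ?_⟩
  · exact (dist_pi_le_iff hr.le).2 fun j => (hz'z j j.2).le
  · obtain ⟨z, hz, hzw⟩ := hcov w hw
    exact ⟨z, hz, fun j hj => (dist_pi_le_iff hr.le).1 hzw ⟨j, hj⟩⟩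

theorem birkSum_le_birkSupBall (hψ : BddAbove (Set.range ψ)) (hy : y ∈ bowenBall f n x r) :
    birkSum f ψ n y ≤ birkSupBall f ψ n x r :=
  le_csSup ((bddAbove_range_birkSum hψ n).mono (Set.image_subset_range _ _)) ⟨y, hy, rfl⟩

variable {δ : ℝ}

theorem birkSum_le_add_of_mem_bowenBall (hvar : ∀ a b : X, dist a b < r → |ψ a - ψ b| ≤ δ)
    (hy : y ∈ bowenBall f n x r) : birkSum f ψ n y ≤ birkSum f ψ n x + n * δ := by
  have := Finset.sum_le_sum fun j (hj : j ∈ Finset.range n) =>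
    sub_le_iff_le_add'.1 (abs_le.1 (hvar _ _ (mem_bowenBall_comm.1 hy j (Finset.mem_range.1 hj)))).2
  simpa [birkSum, Finset.sum_add_distrib] using this

theorem birkSupBall_le_add (hs : 0 < s) (hvar : ∀ a b : X, dist a b < r → |ψ a - ψ b| ≤ δ)
    (hsub : bowenBall f n x s ⊆ bowenBall f n z r) :
    birkSupBall f ψ n x s ≤ birkSum f ψ n z + n * δ :=
  csSup_le ⟨_, Set.mem_image_of_mem _ (mem_bowenBall_self hs)⟩ <| Set.forall_mem_image.2
    fun _ hy => birkSum_le_add_of_mem_bowenBall hvar (hsub hy)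

end Bowen

section WeightedCovers

variable {X : Type} [MetricSpace X] {f : ℕ → X → X} {ψ : X → ℝ} {Z : Set X} {n : ℕ}
  {α δ ε : ℝ}

def ballCost (f : ℕ → X → X) (ψ : X → ℝ) (α ε : ℝ) (n : ℕ) (x : X) : ℝ≥0∞ :=
  ENNReal.ofReal (Real.exp (-α * n + birkSupBall f ψ n x ε))

theorem Mpre_le_tsum {u : Set ℕ} {c : ℕ → X} {m : ℕ → ℕ} (hm : ∀ i ∈ u, n ≤ m i)
    (hcov : Z ⊆ ⋃ i ∈ u, bowenBall f (m i) (c i) ε) :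
    Mpre f ψ Z n α ε ≤ ∑' i : u, ballCost f ψ α ε (m i) (c i) :=
  sInf_le ⟨u, c, m, hm, hcov, rfl⟩

theorem ballCost_add (x : X) :
    ballCost f ψ (α + δ) ε n x = ENNReal.ofReal (Real.exp (-δ)) ^ n * ballCost f ψ α ε n x := by
  rw [ballCost, ballCost, ← ENNReal.ofReal_pow (Real.exp_pos _).le, ← Real.exp_nat_mul,
    ← ENNReal.ofReal_mul (Real.exp_pos _).le, ← Real.exp_add]
  ring_nf

theorem ballCost_le_of_mem_bowenBall (hψ : BddAbove (Set.range ψ)) (hε : 0 < ε)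
    (hvar : ∀ a b : X, dist a b < 4 * ε → |ψ a - ψ b| ≤ δ) {x x' z : X}
    (hz : z ∈ bowenBall f n x ε) (hz' : z ∈ bowenBall f n x' ε) :
    ballCost f ψ (α + δ) (3 * ε) n x ≤ ballCost f ψ α ε n x' := by
  have hsup : birkSupBall f ψ n x (3 * ε) ≤ birkSum f ψ n z + n * δ := by
    refine birkSupBall_le_add (by positivity) hvar fun y hy => ?_
    simpa [show ε + 3 * ε = 4 * ε by ring] using mem_bowenBall_trans (mem_bowenBall_comm.1 hz) hy
  have hz'sup := birkSum_le_birkSupBall hψ hz'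
  exact ENNReal.ofReal_le_ofReal (Real.exp_le_exp.2 (by linarith))

/-- Choose one ball through each point of a maximal `2ε`-separated subset of `Y` for `d_k`: the
groups of balls through distinct separated points are disjoint, and each has weight at least `t`. -/
theorem exists_finset_cover_of_weighted_level [CompactSpace X] {ι : Type*}
    (hψ : BddAbove (Set.range ψ)) (hε : 0 < ε)
    (hvar : ∀ a b : X, dist a b < 4 * ε → |ψ a - ψ b| ≤ δ) {k : ℕ} {L : Set ι} {m : ι → ℕ}
    (hL : ∀ i ∈ L, m i = k) (x : ι → X) (c : ι → ℝ) {Y : Set X} {t : ℝ≥0∞} (ht : t ≠ 0)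
    (hY : ∀ z ∈ Y, t ≤ ∑' i : L,
      (bowenBall f (m i) (x i) ε).indicator (fun _ => ENNReal.ofReal (c i)) z) :
    ∃ J : Finset ι, ↑J ⊆ L ∧ Y ⊆ ⋃ i ∈ J, bowenBall f (m i) (x i) (3 * ε) ∧
      t * ∑ i ∈ J, ballCost f ψ (α + δ) (3 * ε) (m i) (x i) ≤
        ∑' i : L, ENNReal.ofReal (c i) * ballCost f ψ α ε (m i) (x i) := by
  classical
  set I : X → Set ι := fun z => L ∩ {i | z ∈ bowenBall f (m i) (x i) ε}
  have hYI : ∀ z ∈ Y, t ≤ ∑' i : I z, ENNReal.ofReal (c i) := fun z hz =>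
    (hY z hz).trans_eq (tsum_indicator_apply_eq_tsum_inter L (fun i => bowenBall f (m i) (x i) ε)
      (fun i => ENNReal.ofReal (c i)) z)
  have hIne : ∀ z ∈ Y, (I z).Nonempty := by
    intro z hz
    by_contra hempty
    have := hYI z hz
    rw [Set.not_nonempty_iff_eq_empty.1 hempty, tsum_empty] at this
    exact ht (le_zero_iff.1 this)
  rcases Y.eq_empty_or_nonempty with rfl | ⟨z₀, hz₀⟩
  · exact ⟨∅, by simp, by simp, by simp⟩
  have : Nonempty ι := ⟨(hIne z₀ hz₀).some⟩
  choose! φ hφ using hIne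
  obtain ⟨s, hsY, hsep, hscov⟩ :=
    exists_finset_bowen_separated_cover (f := f) k (by positivity : 0 < 2 * ε) Y
  have hdisj : (s : Set X).PairwiseDisjoint I := by
    refine fun z hz z' hz' hne => Set.disjoint_left.2 fun i hi hi' => hsep hz hz' hne ?_
    have := mem_bowenBall_trans (mem_bowenBall_comm.1 hi.2) hi'.2
    rwa [hL i hi.1, ← two_mul] at this
  have hcost : ∀ z ∈ Y, t * ballCost f ψ (α + δ) (3 * ε) (m (φ z)) (x (φ z)) ≤
      ∑' i : I z, ENNReal.ofReal (c i) * ballCost f ψ α ε (m i) (x i) := by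
    intro z hz
    obtain ⟨hφL, hzφ⟩ := hφ z hz
    have hle : ∀ i ∈ I z, ballCost f ψ (α + δ) (3 * ε) (m (φ z)) (x (φ z)) ≤
        ballCost f ψ α ε (m i) (x i) := by
      rintro i ⟨hiL, hzi⟩
      have hzi : z ∈ bowenBall f k (x i) ε := hL i hiL ▸ hzi
      have hzφ : z ∈ bowenBall f k (x (φ z)) ε := hL _ hφL ▸ hzφ
      rw [hL i hiL, hL _ hφL]
      exact ballCost_le_of_mem_bowenBall hψ hε hvar hzφ hzi
    calc t * ballCost f ψ (α + δ) (3 * ε) (m (φ z)) (x (φ z))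
        ≤ (∑' i : I z, ENNReal.ofReal (c i)) * ballCost f ψ (α + δ) (3 * ε) (m (φ z)) (x (φ z)) :=
          mul_le_mul_left (hYI z hz) _
      _ = ∑' i : I z, ENNReal.ofReal (c i) * ballCost f ψ (α + δ) (3 * ε) (m (φ z)) (x (φ z)) :=
          ENNReal.tsum_mul_right.symm
      _ ≤ _ := ENNReal.tsum_le_tsum fun i => mul_le_mul_right (hle i i.2) _
  refine ⟨s.image φ, ?_, fun w hw => ?_, ?_⟩
  · simp only [Finset.coe_image, Set.image_subset_iff]
    exact fun z hz => (hφ z (hsY hz)).1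
  · obtain ⟨z, hz, hzw⟩ := hscov w hw
    obtain ⟨hφL, hzφ⟩ := hφ z (hsY hz)
    refine Set.mem_biUnion (Finset.mem_coe.2 (Finset.mem_image_of_mem φ hz)) fun j hj => ?_
    have := hL _ hφL ▸ hj
    calc dist (nIter f j (x (φ z))) (nIter f j w)
        ≤ dist (nIter f j (x (φ z))) (nIter f j z) + dist (nIter f j z) (nIter f j w) :=
          dist_triangle _ _ _
      _ < ε + 2 * ε := add_lt_add_of_lt_of_le (hzφ j hj) (hzw j this)
      _ = 3 * ε := by ring
  · calc t * ∑ i ∈ s.image φ, ballCost f ψ (α + δ) (3 * ε) (m i) (x i)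
        ≤ t * ∑ z ∈ s, ballCost f ψ (α + δ) (3 * ε) (m (φ z)) (x (φ z)) :=
          mul_le_mul_right (Finset.sum_image_le_of_nonneg fun _ _ => zero_le) _
      _ = ∑ z ∈ s, t * ballCost f ψ (α + δ) (3 * ε) (m (φ z)) (x (φ z)) := Finset.mul_sum _ _ _
      _ ≤ ∑ z ∈ s, ∑' i : I z, ENNReal.ofReal (c i) * ballCost f ψ α ε (m i) (x i) :=
          Finset.sum_le_sum fun z hz => hcost z (hsY hz)
      _ ≤ _ := sum_tsum_le_tsum_of_pairwiseDisjoint hdisj (fun _ _ => Set.inter_subset_left)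
            fun i => ENNReal.ofReal (c i) * ballCost f ψ α ε (m i) (x i)

end WeightedCovers

section Key

variable {X : Type} [MetricSpace X] {f : ℕ → X → X} {ψ : X → ℝ} {Z : Set X} {n : ℕ}
  {α δ ε : ℝ}

/-- The thresholds `t_k = q ρ^k`, `ρ = e^{-δ}`, sum to less than `1`, so every point of `Z` gets
weight at least `t_k` from the balls of some length `k`; the factor `1 / t_k` is then absorbed by
the `e^{-δ k}` gained from raising `α` by `δ`. -/
theorem Mpre_le_mul_tsum_of_weighted [CompactSpace X] (hψ : BddAbove (Set.range ψ))
    (hε : 0 < ε) (hδ : 0 < δ) (hvar : ∀ a b : X, dist a b < 4 * ε → |ψ a - ψ b| ≤ δ)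
    {u : Set ℕ} {cx : ℕ → X} {m : ℕ → ℕ} {c : ℕ → ℝ} (hm : ∀ i ∈ u, n ≤ m i)
    (hcov : ∀ z ∈ Z, 1 ≤ ∑' i : u,
      (bowenBall f (m i) (cx i) ε).indicator (fun _ => ENNReal.ofReal (c i)) z) :
    Mpre f ψ Z n (α + 2 * δ) (3 * ε) ≤ (ENNReal.ofReal ((1 - Real.exp (-δ)) / 2))⁻¹ *
      ∑' i : u, ENNReal.ofReal (c i) * ballCost f ψ α ε (m i) (cx i) := by
  set ρ := ENNReal.ofReal (Real.exp (-δ))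
  set q := ENNReal.ofReal ((1 - Real.exp (-δ)) / 2)
  have hρ1 : Real.exp (-δ) < 1 := Real.exp_lt_one_iff.2 (by linarith)
  have hq0 : q ≠ 0 := (ENNReal.ofReal_pos.2 (by linarith)).ne'
  have hρ0 : ρ ≠ 0 := (ENNReal.ofReal_pos.2 (Real.exp_pos _)).ne'
  set L : ℕ → Set ℕ := fun k => u ∩ m ⁻¹' {k}
  set Y : ℕ → Set X := fun k => {z | q * ρ ^ k ≤ ∑' i : L k,
    (bowenBall f (m i) (cx i) ε).indicator (fun _ => ENNReal.ofReal (c i)) z}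
  have hZ : Z ⊆ ⋃ k, Y k := fun z hz => Set.mem_iUnion.2 <|
    exists_le_tsum_fiber u m (fun i => (bowenBall f (m i) (cx i) ε).indicator
      (fun _ => ENNReal.ofReal (c i)) z) (tsum_geometric_weights_lt_one (Real.exp_pos _).le hρ1)
      (hcov z hz)
  choose J hJL hJY hJcost using fun k =>
    exists_finset_cover_of_weighted_level (α := α + δ) hψ hε hvar (L := L k) (fun i hi => hi.2)
      cx c (mul_ne_zero hq0 (pow_ne_zero k hρ0)) fun z (hz : z ∈ Y k) => hz
  have hJu : ∀ k, ↑(J k) ⊆ u := fun k => (hJL k).trans Set.inter_subset_left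
  have hlevel : ∀ k, ∑ i ∈ J k, ballCost f ψ (α + 2 * δ) (3 * ε) (m i) (cx i) ≤
      q⁻¹ * ∑' i : L k, ENNReal.ofReal (c i) * ballCost f ψ α ε (m i) (cx i) := by
    intro k
    have hshift : ∑' i : L k, ENNReal.ofReal (c i) * ballCost f ψ (α + δ) ε (m i) (cx i) =
        ρ ^ k * ∑' i : L k, ENNReal.ofReal (c i) * ballCost f ψ α ε (m i) (cx i) := by
      rw [← ENNReal.tsum_mul_left]
      refine tsum_congr fun i => ?_
      rw [ballCost_add, (i.2.2 : m i = k)]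
      ring
    have h := hJcost k
    rw [hshift, show α + δ + δ = α + 2 * δ by ring, mul_comm q, mul_assoc] at h
    rw [← ENNReal.mul_le_iff_le_inv hq0 ENNReal.ofReal_ne_top]
    exact (ENNReal.mul_le_mul_iff_right (pow_ne_zero k hρ0)
      (ENNReal.pow_ne_top ENNReal.ofReal_ne_top)).1 h
  calc Mpre f ψ Z n (α + 2 * δ) (3 * ε)
      ≤ ∑' i : ⋃ k, (J k : Set ℕ), ballCost f ψ (α + 2 * δ) (3 * ε) (m i) (cx i) := by
        refine Mpre_le_tsum (fun i hi => ?_) (hZ.trans (Set.iUnion_subset fun k => ?_))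
        · obtain ⟨k, hk⟩ := Set.mem_iUnion.1 hi
          exact hm i (hJu k hk)
        · exact (hJY k).trans
            (Set.biUnion_subset_biUnion_left (Set.subset_iUnion (fun k => (J k : Set ℕ)) k))
    _ ≤ ∑' k, ∑ i ∈ J k, ballCost f ψ (α + 2 * δ) (3 * ε) (m i) (cx i) :=
        (ENNReal.tsum_iUnion_le_tsum _ _).trans_eq (tsum_congr fun k => Finset.tsum_subtype' _ _)
    _ ≤ ∑' k, q⁻¹ * ∑' i : L k, ENNReal.ofReal (c i) * ballCost f ψ α ε (m i) (cx i) :=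
        ENNReal.tsum_le_tsum hlevel
    _ = q⁻¹ * ∑' i : u, ENNReal.ofReal (c i) * ballCost f ψ α ε (m i) (cx i) := by
        rw [ENNReal.tsum_mul_left, tsum_subtype_eq_tsum_fiber u m
          fun i => ENNReal.ofReal (c i) * ballCost f ψ α ε (m i) (cx i)]

end Key

section Comparison

variable {X : Type} [MetricSpace X] {f : ℕ → X → X} {ψ : X → ℝ} {Z : Set X} {n : ℕ}
  {α δ ε : ℝ}

theorem Wpre_le_Mpre : Wpre f ψ Z n α ε ≤ Mpre f ψ Z n α ε := by
  refine sInf_le_sInf ?_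
  rintro S ⟨u, c, m, hm, hcov, rfl⟩
  refine ⟨u, c, m, fun _ => 1, fun _ _ => one_pos, hm, fun z hz => ?_, by simp⟩
  obtain ⟨i, hiu, hzi⟩ := Set.mem_iUnion₂.1 (hcov hz)
  calc (1 : ℝ≥0∞) = (bowenBall f (m i) (c i) ε).indicator (fun _ => ENNReal.ofReal 1) z := by
        simp [hzi]
    _ ≤ _ := ENNReal.le_tsum (⟨i, hiu⟩ : u)

theorem Wlim_le_Mlim : Wlim f ψ Z α ε ≤ Mlim f ψ Z α ε :=
  iSup_mono fun _ => Wpre_le_Mpre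

theorem Mpre_le_mul_Wpre [CompactSpace X] (hψ : BddAbove (Set.range ψ)) (hε : 0 < ε)
    (hδ : 0 < δ) (hvar : ∀ a b : X, dist a b < 4 * ε → |ψ a - ψ b| ≤ δ) :
    Mpre f ψ Z n (α + 2 * δ) (3 * ε) ≤
      (ENNReal.ofReal ((1 - Real.exp (-δ)) / 2))⁻¹ * Wpre f ψ Z n α ε := by
  have hq0 : ENNReal.ofReal ((1 - Real.exp (-δ)) / 2) ≠ 0 :=
    (ENNReal.ofReal_pos.2 (by linarith [Real.exp_lt_one_iff.2 (neg_lt_zero.2 hδ)])).ne'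
  rw [← ENNReal.div_le_iff' (ENNReal.inv_ne_zero.2 ENNReal.ofReal_ne_top)
    (ENNReal.inv_ne_top.2 hq0)]
  refine le_sInf ?_
  rintro S ⟨u, cx, m, c, -, hm, hcov, rfl⟩
  exact (ENNReal.div_le_iff' (ENNReal.inv_ne_zero.2 ENNReal.ofReal_ne_top)
    (ENNReal.inv_ne_top.2 hq0)).2 (Mpre_le_mul_tsum_of_weighted hψ hε hδ hvar hm hcov)

theorem Mlim_eq_zero_of_Wlim_eq_zero [CompactSpace X] (hψ : BddAbove (Set.range ψ))
    (hε : 0 < ε) (hδ : 0 < δ) (hvar : ∀ a b : X, dist a b < 4 * ε → |ψ a - ψ b| ≤ δ)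
    (h : Wlim f ψ Z α ε = 0) : Mlim f ψ Z (α + 2 * δ) (3 * ε) = 0 := by
  refine le_antisymm ?_ zero_le
  calc Mlim f ψ Z (α + 2 * δ) (3 * ε)
      ≤ (ENNReal.ofReal ((1 - Real.exp (-δ)) / 2))⁻¹ * Wlim f ψ Z α ε := by
        rw [Wlim, ENNReal.mul_iSup]
        exact iSup_mono fun n => Mpre_le_mul_Wpre hψ hε hδ hvar
    _ = 0 := by rw [h, mul_zero]

theorem Mpre_add_le_Mpre (hψ : BddAbove (Set.range ψ)) {ε' : ℝ} (hε' : 0 < ε') (hε'ε : ε' ≤ ε)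
    (hvar : ∀ a b : X, dist a b < ε → |ψ a - ψ b| ≤ δ) :
    Mpre f ψ Z n (α + δ) ε ≤ Mpre f ψ Z n α ε' := by
  refine le_sInf ?_
  rintro S ⟨u, c, m, hm, hcov, rfl⟩
  refine (Mpre_le_tsum hm (hcov.trans (Set.iUnion₂_mono fun i _ => bowenBall_mono hε'ε))).trans
    (ENNReal.tsum_le_tsum fun i => ENNReal.ofReal_le_ofReal (Real.exp_le_exp.2 ?_))
  have hsup : birkSupBall f ψ (m i) (c i) ε ≤ birkSum f ψ (m i) (c i) + m i * δ :=
    birkSupBall_le_add (hε'.trans_le hε'ε) hvar le_rfl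
  have hc := birkSum_le_birkSupBall hψ (mem_bowenBall_self hε' (f := f) (n := m i) (x := c i))
  linarith

theorem Mlim_add_eq_zero_of_Mlim_eq_zero (hψ : BddAbove (Set.range ψ)) {ε' : ℝ} (hε' : 0 < ε')
    (hε'ε : ε' ≤ ε) (hvar : ∀ a b : X, dist a b < ε → |ψ a - ψ b| ≤ δ) (h : Mlim f ψ Z α ε' = 0) :
    Mlim f ψ Z (α + δ) ε = 0 :=
  le_antisymm (h ▸ iSup_mono fun _ => Mpre_add_le_Mpre hψ hε' hε'ε hvar) zero_le

end Comparison

section Pressure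

variable {X : Type} [MetricSpace X] {f : ℕ → X → X} {ψ : X → ℝ} {Z : Set X} {δ ε : ℝ}

theorem PWeps_le_PBeps : PWeps f ψ Z ε ≤ PBeps f ψ Z ε :=
  sInf_le_sInf <| Set.image_mono fun _ hα => le_antisymm (hα ▸ Wlim_le_Mlim) zero_le

theorem PBeps_le_PBeps_add (hψ : BddAbove (Set.range ψ)) {ε' : ℝ} (hε' : 0 < ε') (hε'ε : ε' ≤ ε)
    (hvar : ∀ a b : X, dist a b < ε → |ψ a - ψ b| ≤ δ) :
    PBeps f ψ Z ε ≤ PBeps f ψ Z ε' + δ :=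
  sInf_coe_zeroSet_le_add fun _ => Mlim_add_eq_zero_of_Mlim_eq_zero hψ hε' hε'ε hvar

theorem PBeps_three_mul_le_PWeps_add [CompactSpace X] (hψ : BddAbove (Set.range ψ))
    (hε : 0 < ε) (hδ : 0 < δ) (hvar : ∀ a b : X, dist a b < 4 * ε → |ψ a - ψ b| ≤ δ) :
    PBeps f ψ Z (3 * ε) ≤ PWeps f ψ Z ε + (2 * δ : ℝ) :=
  sInf_coe_zeroSet_le_add fun _ => Mlim_eq_zero_of_Wlim_eq_zero hψ hε hδ hvar

end Pressure

theorem statement13_general [CompactSpace X]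
    (f : ℕ → X → X) (ψ : X → ℝ) (hψ : Continuous ψ)
    (Z : Set X) :
    PB f ψ Z = PW f ψ Z := by
  have hbdd : BddAbove (Set.range ψ) := (isCompact_range hψ).bddAbove
  have hvar := fun δ (hδ : 0 < δ) => eventually_abs_sub_le_of_uniformContinuous
    (CompactSpace.uniformContinuous_of_continuous hψ) hδ
  have hB : Tendsto (PBeps f ψ Z) (𝓝[>] 0) (𝓝 (limsup (PBeps f ψ Z) (𝓝[>] 0))) := by
    refine EReal.tendsto_limsup_of_eventually_le_add fun δ hδ => ?_
    filter_upwards [hvar δ hδ, self_mem_nhdsWithin] with ε hεvar (hε : 0 < ε)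
    filter_upwards [Ioc_mem_nhdsGT hε] with ε' hε'
    exact PBeps_le_PBeps_add hbdd hε'.1 hε'.2 hεvar
  have h3 : Tendsto (fun ε : ℝ => 3 * ε) (𝓝[>] 0) (𝓝[>] 0) :=
    tendsto_iff_comap.2 (comap_mulLeft_nhdsGT_zero three_pos).ge
  have hW : Tendsto (PWeps f ψ Z) (𝓝[>] 0) (𝓝 (limsup (PBeps f ψ Z) (𝓝[>] 0))) := by
    refine EReal.tendsto_of_le_of_eventually_le_add hB (hB.comp h3) (fun _ => PWeps_le_PBeps)
      fun δ hδ => ?_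
    filter_upwards [eventually_nhdsGT_zero_mul_left four_pos (hvar (δ / 2) (half_pos hδ)),
      self_mem_nhdsWithin] with ε hεvar (hε : 0 < ε)
    simpa [mul_div_cancel₀] using PBeps_three_mul_le_PWeps_add hbdd hε (half_pos hδ) hεvar
  rw [PB, PW, hB.limUnder_eq, hW.limUnder_eq]

/-- The Pesin–Pitskel topological pressure coincides with the weighted
topological pressure on every subset `Z` of `X`. -/
theorem statement13 [CompactSpace X]
    (f : ℕ → X → X) (hf : ∀ n, Continuous (f n)) (ψ : X → ℝ) (hψ : Continuous ψ)
    (Z : Set X) :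
    PB f ψ Z = PW f ψ Z :=
  statement13_general f ψ hψ Z

end
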